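/- For every typical weight λ, the F-vector space of F-linear endomorphisms of L(λ)⊗L(λ) that commute with Δ(E), Δ(F) and with Δ(Q(h)) for all h ∈ ℤ² has dimension exactly 2. -/

import Mathlib

set_option synthInstance.maxHeartbeats 1000000
set_option maxHeartbeats 1000000
noncomputable section
open scoped TensorProduct

abbrev F : Type := RatFunc ℂ
def q : F := RatFunc.X

/-- The quantum integer [n] = (qⁿ − q⁻ⁿ)/(q − q⁻¹). -/
def qn (n : ℤ) : F := (q ^ n - q ^ (-n)) / (q - q⁻¹)

abbrev V : Type := Fin 2 → F
def v0 : V := Pi.single 0 1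
def v1 : V := Pi.single 1 1

def Eop : V →ₗ[F] V := Matrix.toLin' !![0, 1; 0, 0]
def Fop (l : ℤ × ℤ) : V →ₗ[F] V := Matrix.toLin' !![0, 0; qn (l.1 + l.2), 0]
def Qop (l : ℤ × ℤ) (h : ℤ × ℤ) : V →ₗ[F] V :=
  Matrix.toLin' !![q ^ (h.1 * l.1 + h.2 * l.2), 0; 0, q ^ (h.1 * (l.1 - 1) + h.2 * (l.2 + 1))]
def Pop (l : ℤ × ℤ) : V →ₗ[F] V :=
  Matrix.toLin' !![(-1 : F) ^ l.2, 0; 0, (-1 : F) ^ (l.2 + 1)]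
def Kop (l : ℤ × ℤ) : V →ₗ[F] V := Qop l (1, 1)
def Kinv (l : ℤ × ℤ) : V →ₗ[F] V := Qop l (-1, -1)

def ΔE (l m : ℤ × ℤ) : V ⊗[F] V →ₗ[F] V ⊗[F] V :=
  TensorProduct.map Eop (Kinv m) + TensorProduct.map (Pop l) Eop
def ΔF (l m : ℤ × ℤ) : V ⊗[F] V →ₗ[F] V ⊗[F] V :=
  TensorProduct.map (Fop l) LinearMap.id + TensorProduct.map (Kop l ∘ₗ Pop l) (Fop m)
def ΔQ (l m : ℤ × ℤ) (h : ℤ × ℤ) : V ⊗[F] V →ₗ[F] V ⊗[F] V :=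
  TensorProduct.map (Qop l h) (Qop m h)

instance : AddCommGroup (Module.End F (V ⊗[F] V)) := inferInstance
instance : Module F (Module.End F (V ⊗[F] V)) := inferInstance

/-!
The operator `Δ(Q(1,0))` acts on `vᵢ ⊗ vⱼ` by `q^(2λ₁ - i - j)`, so an endomorphism commuting
with it preserves the weight spaces `⟨v₀⊗v₀⟩`, `⟨v₀⊗v₁, v₁⊗v₀⟩`, `⟨v₁⊗v₁⟩`: only six matrix
entries survive. One entry of the commutation relation with `Δ(E)` and three with `Δ(F)` (divided
by `[λ₁+λ₂]`, nonzero because `λ` is typical) express four of them through the other two, so the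
commutant is spanned by `1` and one explicit matrix `matT`, which does commute with all the
operators.
-/

open Matrix
open scoped Kronecker

theorem RatFunc.X_zpow_injective {K : Type*} [Field K] :
    Function.Injective fun n : ℤ => (RatFunc.X : RatFunc K) ^ n := by
  classical
  intro m n h
  simpa using congrArg (RatFunc.inftyValuation K) h

theorem AlgEquiv.map_centralizer {R A B : Type*} [CommSemiring R] [Semiring A] [Semiring B]
    [Algebra R A] [Algebra R B] (e : A ≃ₐ[R] B) (s : Set A) :
    (Subalgebra.centralizer R s).map (e : A →ₐ[R] B) = Subalgebra.centralizer R (e '' s) := by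
  ext y
  simp only [Subalgebra.mem_map, Subalgebra.mem_centralizer_iff, Set.forall_mem_image]
  constructor
  · rintro ⟨x, hx, rfl⟩ g hg
    simp [← map_mul, hx g hg]
  · intro hy
    refine ⟨e.symm y, fun g hg => e.injective ?_, by simp⟩
    simpa using hy hg

theorem AlgEquiv.finrank_centralizer_image {R A B : Type*} [CommSemiring R] [Semiring A]
    [Semiring B] [Algebra R A] [Algebra R B] (e : A ≃ₐ[R] B) (s : Set A) :
    Module.finrank R (Subalgebra.toSubmodule (Subalgebra.centralizer R (e '' s)))
      = Module.finrank R (Subalgebra.toSubmodule (Subalgebra.centralizer R s)) := by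
  rw [← e.map_centralizer, Subalgebra.map_toSubmodule]
  exact e.toLinearEquiv.finrank_map_eq _

theorem Matrix.apply_eq_zero_of_commute_diagonal {n R : Type*} [DecidableEq n] [Fintype n]
    [CommRing R] [NoZeroDivisors R] {d : n → R} {X : Matrix n n R}
    (h : Commute (diagonal d) X) {i j : n} (hij : d i ≠ d j) : X i j = 0 := by
  have := congrFun (congrFun h.eq i) j
  rw [diagonal_mul, mul_diagonal] at this
  exact (mul_eq_zero.mp (by linear_combination this : (d i - d j) * X i j = 0)).resolve_left
    (sub_ne_zero.mpr hij)

section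
variable {K : Type*} [Field K]

/- Matrices in the basis `vᵢ ⊗ vⱼ`, indexed by `(i, j)`, of `Δ(E)` and `Δ(F)` on
`L(λ) ⊗ L(λ)`, where `p = (-1)^|λ|`, `k = q^(λ₁+λ₂)` and `f = [λ₁+λ₂]`. -/

def matE (p k : K) : Matrix (Fin 2 × Fin 2) (Fin 2 × Fin 2) K :=
  !![0, 1; 0, 0] ⊗ₖ (k⁻¹ • 1) + !![p, 0; 0, -p] ⊗ₖ !![0, 1; 0, 0]

def matF (p k f : K) : Matrix (Fin 2 × Fin 2) (Fin 2 × Fin 2) K :=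
  !![0, 0; f, 0] ⊗ₖ (1 : Matrix (Fin 2) (Fin 2) K)
    + (k • !![p, 0; 0, -p]) ⊗ₖ !![0, 0; f, 0]

/- For `p ^ 2 = 1`, `matT ^ 2 = -p (k + k⁻¹) • matT`: up to scaling, `matT` is the projection onto
a two-dimensional summand of `L(λ) ⊗ L(λ)` containing `v₁ ⊗ v₁`. -/
def matT (p k : K) : Matrix (Fin 2 × Fin 2) (Fin 2 × Fin 2) K :=
  !![1, 0; 0, 0] ⊗ₖ !![0, 0; 0, -(p * k⁻¹)] + !![0, 1; 0, 0] ⊗ₖ !![0, 0; 1, 0]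
    + !![0, 0; 1, 0] ⊗ₖ !![0, 1; 0, 0]
    + !![0, 0; 0, 1] ⊗ₖ !![-(k * p), 0; 0, -(p * k⁻¹ + k * p)]

theorem commute_matE_matT {p k : K} (hp : p ^ 2 = 1) (hk : k ≠ 0) :
    Commute (matE p k) (matT p k) := by
  ext ⟨i₁, i₂⟩ ⟨j₁, j₂⟩
  fin_cases i₁ <;> fin_cases i₂ <;> fin_cases j₁ <;> fin_cases j₂ <;>
    simp [matE, matT, mul_apply, Fintype.sum_prod_type, Fin.sum_univ_two, one_apply] <;> grind

theorem commute_matF_matT {p k : K} (f : K) (hp : p ^ 2 = 1) (hk : k ≠ 0) :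
    Commute (matF p k f) (matT p k) := by
  ext ⟨i₁, i₂⟩ ⟨j₁, j₂⟩
  fin_cases i₁ <;> fin_cases i₂ <;> fin_cases j₁ <;> fin_cases j₂ <;>
    simp [matF, matT, mul_apply, Fintype.sum_prod_type, Fin.sum_univ_two, one_apply] <;> grind

theorem commute_diagonal_matT {d : Fin 2 × Fin 2 → K} (hd : d (0, 1) = d (1, 0)) (p k : K) :
    Commute (diagonal d) (matT p k) := by
  ext ⟨i₁, i₂⟩ ⟨j₁, j₂⟩
  fin_cases i₁ <;> fin_cases i₂ <;> fin_cases j₁ <;> fin_cases j₂ <;>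
    simp [matT, diagonal_mul, mul_diagonal, hd, mul_comm]

theorem eq_smul_one_add_smul_matT_of_commute {p k f : K} (hp : p ^ 2 = 1) (hk : k ≠ 0)
    (hf : f ≠ 0) {X : Matrix (Fin 2 × Fin 2) (Fin 2 × Fin 2) K}
    (hblock : ∀ i j : Fin 2 × Fin 2, (i.1 : ℕ) + i.2 ≠ j.1 + j.2 → X i j = 0)
    (hE : Commute (matE p k) X) (hF : Commute (matF p k f) X) :
    X = X (0, 0) (0, 0) • 1 + X (1, 0) (0, 1) • matT p k := by
  have entry {A : Matrix (Fin 2 × Fin 2) (Fin 2 × Fin 2) K} (h : Commute A X) (i j) :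
      (A * X) i j = (X * A) i j :=
    congrFun (congrFun h.eq i) j
  have hE₁ : p * X (0, 1) (0, 1) + k⁻¹ * X (1, 0) (0, 1) = X (0, 0) (0, 0) * p := by
    simpa [matE, mul_apply, Fintype.sum_prod_type, Fin.sum_univ_two, one_apply, hblock]
      using entry hE (0, 0) (0, 1)
  have hF₁ :
      k * p * f * X (0, 0) (0, 0) = X (0, 1) (0, 1) * (k * p * f) + X (0, 1) (1, 0) * f := by
    simpa [matF, mul_apply, Fintype.sum_prod_type, Fin.sum_univ_two, one_apply, hblock]
      using entry hF (0, 1) (0, 0)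
  have hF₂ : f * X (0, 0) (0, 0) = X (1, 0) (0, 1) * (k * p * f) + X (1, 0) (1, 0) * f := by
    simpa [matF, mul_apply, Fintype.sum_prod_type, Fin.sum_univ_two, one_apply, hblock]
      using entry hF (1, 0) (0, 0)
  have hF₃ : f * X (0, 1) (0, 1) + -(k * p * f * X (1, 0) (0, 1)) = X (1, 1) (1, 1) * f := by
    simpa [matF, mul_apply, Fintype.sum_prod_type, Fin.sum_univ_two, one_apply, hblock]
      using entry hF (1, 1) (0, 1)
  set a := X (0, 0) (0, 0)
  set b := X (1, 0) (0, 1)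
  have h₀₁₀₁ : X (0, 1) (0, 1) = a - p * k⁻¹ * b := by grind
  have h₀₁₁₀ : X (0, 1) (1, 0) = b := by grind
  have h₁₀₁₀ : X (1, 0) (1, 0) = a - k * p * b := by grind
  have h₁₁₁₁ : X (1, 1) (1, 1) = a - (p * k⁻¹ + k * p) * b := by grind
  ext ⟨i₁, i₂⟩ ⟨j₁, j₂⟩
  fin_cases i₁ <;> fin_cases i₂ <;> fin_cases j₁ <;> fin_cases j₂ <;>
    simp [matT, hblock, h₀₁₀₁, h₀₁₁₀, h₁₀₁₀, h₁₁₁₁] <;> ring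

theorem centralizer_eq_span_one_matT {ι : Type*} {p k f : K} (hp : p ^ 2 = 1) (hk : k ≠ 0)
    (hf : f ≠ 0) (w : ι → Fin 2 → K) {h₀ : ι}
    (hw : ∀ i j : Fin 2 × Fin 2,
      w h₀ i.1 * w h₀ i.2 = w h₀ j.1 * w h₀ j.2 → (i.1 : ℕ) + i.2 = j.1 + j.2) :
    Subalgebra.toSubmodule (Subalgebra.centralizer K
        ({matE p k, matF p k f} ∪ Set.range fun h => diagonal fun i => w h i.1 * w h i.2))
      = Submodule.span K {1, matT p k} := by
  apply le_antisymm
  · intro X hX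
    rw [Subalgebra.mem_toSubmodule, Subalgebra.mem_centralizer_iff] at hX
    have hblock : ∀ i j : Fin 2 × Fin 2, (i.1 : ℕ) + i.2 ≠ j.1 + j.2 → X i j = 0 :=
      fun i j hij => apply_eq_zero_of_commute_diagonal (hX _ (Or.inr ⟨h₀, rfl⟩))
        (mt (hw i j) hij)
    rw [eq_smul_one_add_smul_matT_of_commute hp hk hf hblock (hX _ (by simp))
      (hX _ (by simp))]
    exact add_mem (Submodule.smul_mem _ _ (Submodule.subset_span (by simp)))
      (Submodule.smul_mem _ _ (Submodule.subset_span (by simp)))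
  · rw [Submodule.span_le, Set.insert_subset_iff, Set.singleton_subset_iff]
    refine ⟨(Subalgebra.centralizer K _).one_mem, ?_⟩
    rintro g ((rfl | rfl) | ⟨h, rfl⟩)
    · exact commute_matE_matT hp hk
    · exact commute_matF_matT f hp hk
    · exact commute_diagonal_matT (mul_comm _ _) p k

theorem finrank_span_one_matT (p k : K) :
    Module.finrank K (Submodule.span K {1, matT p k}) = 2 := by
  have hindep : LinearIndependent K ![1, matT p k] := by
    refine (LinearIndependent.pair_iff' one_ne_zero).mpr fun a ha => ?_
    simpa [matT] using congrFun (congrFun ha (0, 1)) (1, 0)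
  rw [← range_cons_cons_empty, finrank_span_eq_card hindep, Fintype.card_fin]

end

theorem q_ne_zero : q ≠ 0 := RatFunc.X_ne_zero

theorem qn_ne_zero {n : ℤ} (hn : n ≠ 0) : qn n ≠ 0 := by
  have hq : q - q⁻¹ ≠ 0 := by
    rw [sub_ne_zero, ← _root_.zpow_neg_one]
    intro h
    exact absurd (RatFunc.X_zpow_injective ((zpow_one q).trans h)) (by norm_num)
  refine div_ne_zero (sub_ne_zero.mpr fun h => hn ?_) hq
  have := RatFunc.X_zpow_injective h
  omega

/- The eigenvalue `q^⟨h, λ - iα⟩` of `Q_λ(h)` on `vᵢ`. -/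
def weight (l h : ℤ × ℤ) (i : Fin 2) : F := q ^ (h.1 * (l.1 - i) + h.2 * (l.2 + i))

theorem toMatrix'_Qop (l h : ℤ × ℤ) :
    LinearMap.toMatrix' (Qop l h) = diagonal (weight l h) := by
  rw [Qop, LinearMap.toMatrix'_toLin']
  ext i j
  fin_cases i <;> fin_cases j <;> simp [weight]

theorem Qop_eq_smul_id {l h : ℤ × ℤ} {c : F} (hc : ∀ i, weight l h i = c) :
    Qop l h = c • LinearMap.id := by
  apply LinearMap.toMatrix'.injective
  rw [toMatrix'_Qop, map_smul, LinearMap.toMatrix'_id, smul_one_eq_diagonal]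
  exact congrArg diagonal (funext hc)

theorem Kop_eq_smul_id (l : ℤ × ℤ) : Kop l = q ^ (l.1 + l.2) • LinearMap.id :=
  Qop_eq_smul_id fun i => by simp only [weight]; ring_nf

theorem Kinv_eq_smul_id (l : ℤ × ℤ) : Kinv l = (q ^ (l.1 + l.2))⁻¹ • LinearMap.id :=
  Qop_eq_smul_id fun i => by rw [weight, ← _root_.zpow_neg]; ring_nf

theorem toMatrix'_Pop (l : ℤ × ℤ) :
    LinearMap.toMatrix' (Pop l) = !![(-1) ^ l.2, 0; 0, -(-1) ^ l.2] := by
  rw [Pop, LinearMap.toMatrix'_toLin', zpow_add_one₀ (neg_ne_zero.mpr one_ne_zero), mul_neg_one]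

def tensorBasis : Module.Basis (Fin 2 × Fin 2) F (V ⊗[F] V) :=
  (Pi.basisFun F (Fin 2)).tensorProduct (Pi.basisFun F (Fin 2))

theorem toMatrixAlgEquiv_tensorBasis_map (f g : V →ₗ[F] V) :
    LinearMap.toMatrixAlgEquiv tensorBasis (TensorProduct.map f g)
      = LinearMap.toMatrix' f ⊗ₖ LinearMap.toMatrix' g := by
  change LinearMap.toMatrix tensorBasis tensorBasis _ = _
  rw [tensorBasis, TensorProduct.toMatrix_map, LinearMap.toMatrix_eq_toMatrix']

theorem toMatrixAlgEquiv_ΔE (l : ℤ × ℤ) :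
    LinearMap.toMatrixAlgEquiv tensorBasis (ΔE l l) = matE ((-1) ^ l.2) (q ^ (l.1 + l.2)) := by
  rw [ΔE, map_add, toMatrixAlgEquiv_tensorBasis_map, toMatrixAlgEquiv_tensorBasis_map,
    Kinv_eq_smul_id, toMatrix'_Pop, Eop, LinearMap.toMatrix'_toLin', map_smul,
    LinearMap.toMatrix'_id, matE]

theorem toMatrixAlgEquiv_ΔF (l : ℤ × ℤ) :
    LinearMap.toMatrixAlgEquiv tensorBasis (ΔF l l)
      = matF ((-1) ^ l.2) (q ^ (l.1 + l.2)) (qn (l.1 + l.2)) := by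
  rw [ΔF, map_add, toMatrixAlgEquiv_tensorBasis_map, toMatrixAlgEquiv_tensorBasis_map,
    Kop_eq_smul_id, LinearMap.smul_comp, LinearMap.id_comp, map_smul, toMatrix'_Pop, Fop,
    LinearMap.toMatrix'_toLin', LinearMap.toMatrix'_id, matF]

theorem toMatrixAlgEquiv_ΔQ (l h : ℤ × ℤ) :
    LinearMap.toMatrixAlgEquiv tensorBasis (ΔQ l l h)
      = diagonal fun i => weight l h i.1 * weight l h i.2 := by
  rw [ΔQ, toMatrixAlgEquiv_tensorBasis_map, toMatrix'_Qop, diagonal_kronecker_diagonal]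

/-- the space of `U_q(gl(1|1))`-equivariant endomorphisms of
`L(λ)⊗L(λ)` is two-dimensional. -/
theorem endomorphism_algebra_dim (l : ℤ × ℤ) (hl : l.1 + l.2 ≠ 0) :
    Module.finrank F
      (Subalgebra.toSubmodule
        (Subalgebra.centralizer F
          (({ΔE l l, ΔF l l} ∪ Set.range (ΔQ l l)) : Set (Module.End F (V ⊗[F] V))))) = 2 := by
  have himage :
      LinearMap.toMatrixAlgEquiv tensorBasis '' ({ΔE l l, ΔF l l} ∪ Set.range (ΔQ l l))
        = {matE ((-1) ^ l.2) (q ^ (l.1 + l.2)),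
            matF ((-1) ^ l.2) (q ^ (l.1 + l.2)) (qn (l.1 + l.2))}
          ∪ Set.range fun h => diagonal fun i => weight l h i.1 * weight l h i.2 := by
    rw [Set.image_union, Set.image_insert_eq, Set.image_singleton, ← Set.range_comp,
      toMatrixAlgEquiv_ΔE, toMatrixAlgEquiv_ΔF]
    exact congrArg _ (congrArg Set.range (funext (toMatrixAlgEquiv_ΔQ l)))
  have hp : ((-1 : F) ^ l.2) ^ 2 = 1 := by
    rw [← zpow_natCast, ← _root_.zpow_mul, mul_comm, _root_.zpow_mul]; norm_num
  have hw : ∀ i j : Fin 2 × Fin 2, weight l (1, 0) i.1 * weight l (1, 0) i.2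
      = weight l (1, 0) j.1 * weight l (1, 0) j.2 → (i.1 : ℕ) + i.2 = j.1 + j.2 := by
    intro i j hij
    simp only [weight, one_mul, zero_mul, add_zero, ← zpow_add₀ q_ne_zero] at hij
    have := RatFunc.X_zpow_injective hij
    omega
  rw [← (LinearMap.toMatrixAlgEquiv tensorBasis).finrank_centralizer_image, himage,
    centralizer_eq_span_one_matT hp (zpow_ne_zero _ q_ne_zero) (qn_ne_zero hl) (weight l) hw,
    finrank_span_one_matT]
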